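/- arXiv:2505.13614 — 4 statements merged into one kernel-verified Lean document; each statement's English description precedes it below -/
import Mathlib

section
/- Let p ∈ ℝ^C be a probability vector with strictly positive entries, I = diag(p) − p pᵀ, and suppose D is a diagonal matrix with I ⪯ D ⪯ diag(p) (Loewner order). Then D = diag(p). In other words, diag(p) is the least diagonal upper bound of I. -/
open Matrix

/-- `diag(p)` is the least diagonal Loewner upper bound of `I = diag(p) - p pᵀ`:
if `D` is diagonal with `I ⪯ D ⪯ diag(p)`, then `D = diag(p)`. -/
theorem simplex_fim_diag_envelope (C : ℕ) (hC : 2 ≤ C) (p : Fin C → ℝ)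
    (hp : ∀ i, 0 < p i) (hsum : ∑ i, p i = 1)
    (D : Matrix (Fin C) (Fin C) ℝ) (hD : D.IsDiag)
    (h₁ : (D - (Matrix.diagonal p - Matrix.vecMulVec p p)).PosSemidef)
    (h₂ : (Matrix.diagonal p - D).PosSemidef) :
    D = Matrix.diagonal p := by
  have hle : ∀ a, D a a ≤ p a := by
    intro a
    have h := h₂.dotProduct_mulVec_nonneg (Pi.single a 1)
    simp [star_trivial, mulVec_single, single_dotProduct, Matrix.sub_apply] at h
    linarith
  have hdiag : ∀ i, D i i = p i := by
    intro i
    haveI : Nontrivial (Fin C) := Fin.nontrivial_iff_two_le.mpr hC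
    obtain ⟨k, hk⟩ := exists_ne i
    set t : ℝ := p i / p k with ht_def
    have hpk : p k ≠ 0 := (hp k).ne'
    have ht : t * p k = p i := div_mul_cancel₀ _ hpk
    have h := h₁.dotProduct_mulVec_nonneg (Pi.single i 1 + Pi.single k (-t))
    have hik : D i k = 0 := hD hk.symm
    have hki : D k i = 0 := hD hk
    simp [star_trivial, mulVec_add, dotProduct_add, add_dotProduct, mulVec_single,
      single_dotProduct, Matrix.sub_apply, vecMulVec_apply, diagonal_apply_ne _ hk,
      diagonal_apply_ne _ hk.symm, hik, hki] at h
    have h1 := hle i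
    have h2 := hle k
    nlinarith [mul_nonneg (mul_self_nonneg t) (sub_nonneg.2 h2), sq_nonneg t,
      mul_self_nonneg (t * p k - p i)]
  ext i j
  by_cases hij : i = j
  · subst hij; simp [hdiag i]
  · simp [hD hij, diagonal_apply_ne _ hij]
end

section
/- Let I be a real symmetric positive semidefinite C×C matrix with spectral decomposition I = ∑_{i=1}^C λ_i v_i v_iᵀ where λ_1 ≤ ⋯ ≤ λ_{C−1} < λ_C and {v_i} orthonormal. If u ∈ ℝ^C satisfies λ_C v_C v_Cᵀ ⪯ u uᵀ ⪯ I (Loewner order), then u uᵀ = λ_C v_C v_Cᵀ. -/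
open Matrix

lemma mulVec_vecMulVec' {n : ℕ} (a b x : Fin n → ℝ) :
    vecMulVec a b *ᵥ x = (b ⬝ᵥ x) • a := by
  funext i
  simp [vecMulVec, mulVec, dotProduct, Finset.mul_sum, mul_assoc, mul_comm, mul_left_comm]

lemma quad_vecMulVec {n : ℕ} (a x : Fin n → ℝ) :
    x ⬝ᵥ (vecMulVec a a *ᵥ x) = (a ⬝ᵥ x) ^ 2 := by
  rw [mulVec_vecMulVec', dotProduct_smul, smul_eq_mul, dotProduct_comm]
  ring

lemma quad_I {n : ℕ} (lam : Fin n → ℝ) (v : Fin n → Fin n → ℝ) (x : Fin n → ℝ) :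
    x ⬝ᵥ ((∑ i, lam i • vecMulVec (v i) (v i)) *ᵥ x) = ∑ i, lam i * (v i ⬝ᵥ x) ^ 2 := by
  rw [show (∑ i, lam i • vecMulVec (v i) (v i)) *ᵥ x
      = ∑ i, (lam i • vecMulVec (v i) (v i)) *ᵥ x from
    map_sum (Matrix.mulVec.addMonoidHomLeft x) _ _]
  simp only [Matrix.smul_mulVec, mulVec_vecMulVec']
  simp only [dotProduct, Finset.sum_apply, Pi.smul_apply, smul_eq_mul, Finset.mul_sum]
  rw [Finset.sum_comm]
  refine Finset.sum_congr rfl fun i _ => ?_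
  have : ∑ k, x k * (lam i * ((∑ j, v i j * x j) * v i k))
      = (lam i * (∑ j, v i j * x j)) * ∑ k, v i k * x k := by
    rw [Finset.mul_sum]
    exact Finset.sum_congr rfl fun k _ => by ring
  rw [this]; ring

/-- If a symmetric PSD matrix `I` has spectral decomposition with simple largest
eigenvalue `λ_C` (unit eigenvector `v_C`), and `u uᵀ` squeezes between
`λ_C v_C v_Cᵀ` and `I` in the Loewner order, then `u uᵀ = λ_C v_C v_Cᵀ`. -/
theorem rank_one_envelope (C : ℕ) (hC : 2 ≤ C)
    (I : Matrix (Fin C) (Fin C) ℝ) (lam : Fin C → ℝ) (v : Fin C → Fin C → ℝ)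
    (hpsd : I.PosSemidef)
    (hdecomp : I = ∑ i, lam i • Matrix.vecMulVec (v i) (v i))
    (horth : ∀ i j, v i ⬝ᵥ v j = if i = j then (1 : ℝ) else 0)
    (hmono : Monotone lam)
    (htop : ∀ i : Fin C, i ≠ ⟨C - 1, by omega⟩ → lam i < lam ⟨C - 1, by omega⟩)
    (u : Fin C → ℝ)
    (hlow : (Matrix.vecMulVec u u -
      lam ⟨C - 1, by omega⟩ •
        Matrix.vecMulVec (v ⟨C - 1, by omega⟩) (v ⟨C - 1, by omega⟩)).PosSemidef)
    (hup : (I - Matrix.vecMulVec u u).PosSemidef) :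
    Matrix.vecMulVec u u =
      lam ⟨C - 1, by omega⟩ •
        Matrix.vecMulVec (v ⟨C - 1, by omega⟩) (v ⟨C - 1, by omega⟩) := by
  set t : Fin C := ⟨C - 1, by omega⟩ with ht
  set w : Fin C → ℝ := v t with hw
  set lC : ℝ := lam t with hlC
  -- quadratic form inequalities
  have hlowq : ∀ x : Fin C → ℝ, lC * (w ⬝ᵥ x) ^ 2 ≤ (u ⬝ᵥ x) ^ 2 := by
    intro x
    have h := hlow.dotProduct_mulVec_nonneg x
    rw [star_trivial, Matrix.sub_mulVec, dotProduct_sub, quad_vecMulVec,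
      Matrix.smul_mulVec, dotProduct_smul, quad_vecMulVec, smul_eq_mul] at h
    linarith
  have hupq : ∀ x : Fin C → ℝ, (u ⬝ᵥ x) ^ 2 ≤ ∑ i, lam i * (v i ⬝ᵥ x) ^ 2 := by
    intro x
    have h := hup.dotProduct_mulVec_nonneg x
    rw [star_trivial, Matrix.sub_mulVec, dotProduct_sub, quad_vecMulVec, hdecomp,
      quad_I] at h
    linarith
  -- collapse of the eigen-sum at basis vectors
  have hcollapse : ∀ j : Fin C, ∑ i, lam i * (v i ⬝ᵥ v j) ^ 2 = lam j := by
    intro j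
    rw [Finset.sum_eq_single j]
    · rw [horth j j]; simp
    · intro i _ hij
      rw [horth i j, if_neg hij]; ring
    · simp
  have hww : w ⬝ᵥ w = 1 := by rw [hw, horth t t, if_pos rfl]
  -- positivity of top eigenvalue
  have hl0 : 0 ≤ lam ⟨0, by omega⟩ := by
    have h := hpsd.dotProduct_mulVec_nonneg (v ⟨0, by omega⟩)
    rw [star_trivial, hdecomp, quad_I, hcollapse] at h
    exact h
  have hne : (⟨0, by omega⟩ : Fin C) ≠ t := by
    rw [ht]; intro h
    have := congrArg Fin.val h
    simp at this; omega
  have hlCpos : 0 < lC := lt_of_le_of_lt hl0 (htop _ hne)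
  -- the squeeze at w
  have hc2 : (u ⬝ᵥ w) ^ 2 = lC := by
    have h1 := hlowq w
    have h2 := hupq w
    rw [hww] at h1
    rw [hcollapse t] at h2
    rw [← hlC] at h2
    nlinarith
  -- orthogonality of u to the other eigenvectors
  have hudot : ∀ i : Fin C, i ≠ t → u ⬝ᵥ v i = 0 := by
    intro i hi
    set c : ℝ := u ⬝ᵥ w with hc
    set d : ℝ := u ⬝ᵥ v i with hd
    have hwvi : w ⬝ᵥ v i = 0 := by rw [hw, horth t i, if_neg (Ne.symm hi)]
    have hx := hlowq (d • w - c • v i)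
    rw [dotProduct_sub, dotProduct_smul, dotProduct_smul, dotProduct_sub,
      dotProduct_smul, dotProduct_smul, hww, hwvi, ← hc, ← hd] at hx
    simp only [smul_eq_mul, mul_one, mul_zero, sub_zero] at hx
    have : lC * d ^ 2 ≤ 0 := by nlinarith
    have hd2 : d ^ 2 ≤ 0 := by
      by_contra h
      push_neg at h
      nlinarith
    have : d = 0 := by nlinarith [sq_nonneg d]
    exact this
  -- u = (w ⬝ᵥ u) • w
  have hVtV : (Matrix.of v)ᵀ * (Matrix.of v) = 1 := by
    apply mul_eq_one_comm.mp
    ext i j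
    simp only [Matrix.mul_apply, Matrix.transpose_apply, Matrix.of_apply, Matrix.one_apply]
    exact horth i j
  have hurec : ∀ j, u j = ∑ i, v i j * (v i ⬝ᵥ u) := by
    intro j
    have h : (Matrix.of v)ᵀ *ᵥ ((Matrix.of v) *ᵥ u) = u := by
      rw [Matrix.mulVec_mulVec, hVtV, Matrix.one_mulVec]
    have := congrFun h j
    rw [← this]
    simp only [mulVec, dotProduct, Matrix.transpose_apply, Matrix.of_apply]
  have hu : ∀ j, u j = (u ⬝ᵥ w) * w j := by
    intro j
    rw [hurec j, Finset.sum_eq_single t]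
    · rw [← hw, dotProduct_comm]; ring
    · intro i _ hit
      rw [dotProduct_comm, hudot i hit]; ring
    · simp
  -- conclude
  ext i j
  simp only [Matrix.vecMulVec_apply, Matrix.smul_apply, smul_eq_mul]
  rw [hu i, hu j, ← hc2]
  ring
end

section
/- Let p ∈ ℝ^C be a probability vector, I = diag(p) − p pᵀ, and let p_{(1)} ≤ p_{(2)} ≤ ⋯ ≤ p_{(C)} be the entries of p sorted in ascending order. Then for every i ∈ {1,…,C−1}, the i-th smallest eigenvalue λ_i of I satisfies λ_i ≤ p_{(i)}. -/
open Matrix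

/-- Parseval-type identities for the eigenvector basis of a Hermitian real matrix. -/
lemma quad_form_eigen {C : ℕ} {A : Matrix (Fin C) (Fin C) ℝ} (hA : A.IsHermitian)
    (x : Fin C → ℝ) :
    x ⬝ᵥ x = ∑ j, (⇑(hA.eigenvectorBasis j) ⬝ᵥ x) ^ 2 ∧
    x ⬝ᵥ (A *ᵥ x) = ∑ j, hA.eigenvalues j * (⇑(hA.eigenvectorBasis j) ⬝ᵥ x) ^ 2 := by
  set U : Matrix (Fin C) (Fin C) ℝ := (hA.eigenvectorUnitary : Matrix (Fin C) (Fin C) ℝ) with hU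
  have hUU : U * star U = 1 := (Matrix.mem_unitaryGroup_iff).1 hA.eigenvectorUnitary.2
  set z : Fin C → ℝ := star U *ᵥ x with hz
  have hzj : ∀ j, z j = ⇑(hA.eigenvectorBasis j) ⬝ᵥ x := by
    intro j
    simp [hz, mulVec, dotProduct, Matrix.star_eq_conjTranspose, conjTranspose_apply, hU]
  have hUz : U *ᵥ z = x := by
    rw [hz, mulVec_mulVec, hUU, one_mulVec]
  have hxU : ∀ w : Fin C → ℝ, x ⬝ᵥ (U *ᵥ w) = z ⬝ᵥ w := by
    intro w
    rw [dotProduct_mulVec]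
    congr 1
    rw [hz, Matrix.star_eq_conjTranspose, conjTranspose_eq_transpose_of_trivial,
      mulVec_transpose]
  constructor
  · have : x ⬝ᵥ x = z ⬝ᵥ z := by
      rw [← hxU z, hUz]
    rw [this, dotProduct]
    exact Finset.sum_congr rfl fun j _ => by rw [hzj j]; ring
  · have hAx : A *ᵥ x = U *ᵥ ((diagonal (RCLike.ofReal ∘ hA.eigenvalues)) *ᵥ z) := by
      conv_lhs => rw [hA.spectral_theorem]
      rw [Unitary.conjStarAlgAut_apply, ← mulVec_mulVec, ← mulVec_mulVec]
    rw [hAx, hxU, dotProduct]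
    refine Finset.sum_congr rfl fun j _ => ?_
    rw [mulVec_diagonal, hzj j]
    simp
    ring

/-- Cauchy interlacing for the simplex FIM: if `lam` lists the eigenvalues of
`I = diag(p) - p pᵀ` in ascending order and `q` lists the entries of `p` in
ascending order, then `λ_i ≤ p_(i)` for every `i = 1, …, C-1` (0-based:
`i < C - 1`). -/
theorem simplex_fim_interlacing (C : ℕ) (hC : 2 ≤ C) (p : Fin C → ℝ)
    (hp : ∀ i, 0 ≤ p i) (hsum : ∑ i, p i = 1)
    (hI : (Matrix.diagonal p - Matrix.vecMulVec p p).IsHermitian)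
    (lam : Fin C → ℝ) (hlammono : Monotone lam)
    (hlamperm : ∃ σ : Equiv.Perm (Fin C), lam = hI.eigenvalues ∘ σ)
    (q : Fin C → ℝ) (hqmono : Monotone q)
    (hqperm : ∃ σ : Equiv.Perm (Fin C), q = p ∘ σ) :
    ∀ i : Fin C, (i : ℕ) < C - 1 → lam i ≤ q i := by
  obtain ⟨σl, hσl⟩ := hlamperm
  obtain ⟨σq, hσq⟩ := hqperm
  intro i _hi
  have hi1 : (i : ℕ) + 1 ≤ C := i.2
  have hiC : (i : ℕ) ≤ C := le_of_lt i.2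
  set b := hI.eigenvectorBasis with hb
  set A := Matrix.diagonal p - Matrix.vecMulVec p p with hA
  set M : Matrix (Fin C) (Fin ((i : ℕ) + 1)) ℝ :=
    Matrix.of (fun t j => if σq (Fin.castLE hi1 j) = t then (1 : ℝ) else 0) with hM
  set N : Matrix (Fin (i : ℕ)) (Fin C) ℝ :=
    Matrix.of (fun j t => ⇑(b (σl (Fin.castLE hiC j))) t) with hN
  -- a nonzero kernel element
  have hker : LinearMap.ker (N * M).mulVecLin ≠ ⊥ := by
    intro h
    have hinj := LinearMap.ker_eq_bot.1 h
    have := LinearMap.finrank_le_finrank_of_injective hinj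
    rw [Module.finrank_fin_fun, Module.finrank_fin_fun] at this
    omega
  obtain ⟨c, hc, hc0⟩ := Submodule.exists_mem_ne_zero_of_ne_bot hker
  rw [LinearMap.mem_ker, mulVecLin_apply, ← mulVec_mulVec] at hc
  set x : Fin C → ℝ := M *ᵥ c with hx
  have hxval : ∀ j, x (σq (Fin.castLE hi1 j)) = c j := by
    intro j
    rw [hx, mulVec]
    show (∑ j', (if σq (Fin.castLE hi1 j') = σq (Fin.castLE hi1 j) then (1:ℝ) else 0) * c j') = c j
    rw [Finset.sum_eq_single j]
    · simp
    · intro j' _ hj'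
      have : σq (Fin.castLE hi1 j') ≠ σq (Fin.castLE hi1 j) := by
        simp only [ne_eq, EmbeddingLike.apply_eq_iff_eq, Fin.castLE_inj]
        exact hj'
      simp [this]
    · simp
  have hxzero : ∀ t, (∀ j, σq (Fin.castLE hi1 j) ≠ t) → x t = 0 := by
    intro t ht
    rw [hx, mulVec]
    show (∑ j', (if σq (Fin.castLE hi1 j') = t then (1:ℝ) else 0) * c j') = 0
    refine Finset.sum_eq_zero fun j' _ => by simp [ht j']
  have hxne : x ≠ 0 := by
    intro h
    apply hc0
    ext j
    have := hxval j
    rw [h] at this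
    simpa using this.symm
  -- orthogonality constraints
  have hbort : ∀ j' : Fin (i : ℕ), ⇑(b (σl (Fin.castLE hiC j'))) ⬝ᵥ x = 0 := by
    intro j'
    have := congrFun hc j'
    rw [mulVec] at this
    exact this
  obtain ⟨hx2, hxA⟩ := quad_form_eigen hI x
  have hxx_pos : 0 < x ⬝ᵥ x := by
    rcases lt_or_eq_of_le (Finset.sum_nonneg fun t _ => mul_self_nonneg (x t) :
        (0:ℝ) ≤ x ⬝ᵥ x) with h | h
    · exact h
    · exact absurd (dotProduct_self_eq_zero.1 h.symm) hxne
  -- lower bound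
  have hlow : lam i * (x ⬝ᵥ x) ≤ x ⬝ᵥ (A *ᵥ x) := by
    rw [hxA, hx2, Finset.mul_sum]
    refine Finset.sum_le_sum fun j _ => ?_
    by_cases hj : ∃ j' : Fin (i : ℕ), σl (Fin.castLE hiC j') = j
    · obtain ⟨j', rfl⟩ := hj
      rw [hbort j']
      simp
    · push_neg at hj
      have hge : i ≤ σl.symm j := by
        by_contra hlt
        push_neg at hlt
        have hv : ((σl.symm j : Fin C) : ℕ) < (i : ℕ) := hlt
        refine hj ⟨(σl.symm j).val, hv⟩ ?_
        have hcast : Fin.castLE hiC ⟨(σl.symm j).val, hv⟩ = σl.symm j := Fin.ext rfl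
        rw [hcast, Equiv.apply_symm_apply]
      have heq : hI.eigenvalues j = lam (σl.symm j) := by
        rw [hσl, Function.comp_apply, Equiv.apply_symm_apply]
      have : lam i ≤ hI.eigenvalues j := heq ▸ hlammono hge
      exact mul_le_mul_of_nonneg_right this (sq_nonneg _)
  -- upper bound
  have hhigh : x ⬝ᵥ (A *ᵥ x) ≤ q i * (x ⬝ᵥ x) := by
    have hdiag : x ⬝ᵥ (Matrix.diagonal p *ᵥ x) = ∑ t, p t * (x t * x t) := by
      rw [dotProduct]
      exact Finset.sum_congr rfl fun t _ => by rw [mulVec_diagonal]; ring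
    have hvmv : x ⬝ᵥ (Matrix.vecMulVec p p *ᵥ x) = (p ⬝ᵥ x) * (p ⬝ᵥ x) := by
      rw [dotProduct]
      have : ∀ t, (Matrix.vecMulVec p p *ᵥ x) t = p t * (p ⬝ᵥ x) := by
        intro t
        rw [mulVec]
        show (∑ s, p t * p s * x s) = _
        rw [dotProduct, Finset.mul_sum]
        exact Finset.sum_congr rfl fun s _ => by ring
      calc (∑ t, x t * (Matrix.vecMulVec p p *ᵥ x) t)
          = ∑ t, x t * (p t * (p ⬝ᵥ x)) := Finset.sum_congr rfl fun t _ => by rw [this t]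
        _ = (∑ t, p t * x t) * (p ⬝ᵥ x) := by rw [Finset.sum_mul]; exact Finset.sum_congr rfl fun t _ => by ring
        _ = (p ⬝ᵥ x) * (p ⬝ᵥ x) := by rw [dotProduct]
    have hAx : x ⬝ᵥ (A *ᵥ x) = (∑ t, p t * (x t * x t)) - (p ⬝ᵥ x) * (p ⬝ᵥ x) := by
      rw [hA, sub_mulVec, dotProduct_sub, hdiag, hvmv]
    rw [hAx]
    have h1 : (∑ t, p t * (x t * x t)) ≤ q i * (x ⬝ᵥ x) := by
      rw [dotProduct, Finset.mul_sum]
      refine Finset.sum_le_sum fun t _ => ?_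
      by_cases hxt : x t = 0
      · simp [hxt]
      · have : ∃ j, σq (Fin.castLE hi1 j) = t := by
          by_contra hcon
          push_neg at hcon
          exact hxt (hxzero t hcon)
        obtain ⟨j, rfl⟩ := this
        have hpq : p (σq (Fin.castLE hi1 j)) = q (Fin.castLE hi1 j) := by
          rw [hσq]; rfl
        have hle : q (Fin.castLE hi1 j) ≤ q i := by
          apply hqmono
          show ((Fin.castLE hi1 j : Fin C) : ℕ) ≤ (i : ℕ)
          have := j.2
          simp only [Fin.coe_castLE]
          omega
        rw [hpq]
        exact mul_le_mul_of_nonneg_right hle (mul_self_nonneg _)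
    nlinarith [mul_self_nonneg (p ⬝ᵥ x)]
  have h := le_trans hlow hhigh
  rw [mul_comm (lam i), mul_comm (q i)] at h
  exact le_of_mul_le_mul_left h hxx_pos
end

section
/- Let p ∈ ℝ^C be a probability vector and I = diag(p) − p pᵀ. Let λ_C be the largest eigenvalue of I. For the label y achieving the minimum entry p_{(1)} of p, the rank-1 matrix R = (e_y − p)(e_y − p)ᵀ satisfies ‖R − I‖_F ≥ 1 + ‖p‖² − λ_C − 2 p_{(1)} ≥ 2‖p‖² − 2 p_{(1)}. -/
open Matrix

section Helpers

variable {n : Type*} [Fintype n]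

lemma frob_quad_bound (M : Matrix n n ℝ) (u : n → ℝ) :
    u ⬝ᵥ M *ᵥ u ≤ Real.sqrt (∑ i, ∑ j, (M i j) ^ 2) * (∑ i, (u i) ^ 2) := by
  have hs : (0:ℝ) ≤ ∑ i, (u i)^2 := Finset.sum_nonneg fun i _ => sq_nonneg _
  have hK : (0:ℝ) ≤ ∑ i, ∑ j, (M i j)^2 :=
    Finset.sum_nonneg fun i _ => Finset.sum_nonneg fun j _ => sq_nonneg _
  have h1 : u ⬝ᵥ M *ᵥ u ≤ Real.sqrt (∑ i, (u i)^2) * Real.sqrt (∑ i, ((M *ᵥ u) i)^2) :=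
    Real.sum_mul_le_sqrt_mul_sqrt _ _ _
  have h2 : ∑ i, ((M *ᵥ u) i)^2 ≤ (∑ i, ∑ j, (M i j)^2) * (∑ j, (u j)^2) := by
    rw [Finset.sum_mul]
    refine Finset.sum_le_sum fun i _ => ?_
    simpa [Matrix.mulVec, dotProduct] using
      Finset.sum_mul_sq_le_sq_mul_sq Finset.univ (fun j => M i j) u
  calc u ⬝ᵥ M *ᵥ u ≤ Real.sqrt (∑ i, (u i)^2) * Real.sqrt (∑ i, ((M *ᵥ u) i)^2) := h1
    _ ≤ Real.sqrt (∑ i, (u i)^2) * Real.sqrt ((∑ i, ∑ j, (M i j)^2) * (∑ j, (u j)^2)) := by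
        gcongr
    _ = Real.sqrt (∑ i, ∑ j, (M i j)^2) * (∑ i, (u i)^2) := by
        rw [Real.sqrt_mul hK, ← mul_assoc, mul_comm (Real.sqrt (∑ i, (u i)^2)), mul_assoc,
          Real.mul_self_sqrt hs]

lemma rayleigh_le [DecidableEq n] [Nonempty n] {A : Matrix n n ℝ} (hA : A.IsHermitian)
    (u : n → ℝ) : u ⬝ᵥ A *ᵥ u ≤ (⨆ j, hA.eigenvalues j) * (∑ i, (u i) ^ 2) := by
  set U : Matrix n n ℝ := (hA.eigenvectorUnitary : Matrix n n ℝ) with hU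
  have hstar : star U = Uᵀ := by
    rw [star_eq_conjTranspose, conjTranspose_eq_transpose_of_trivial]
  set w : n → ℝ := Uᵀ *ᵥ u with hwdef
  have hdiag : (RCLike.ofReal ∘ hA.eigenvalues : n → ℝ) = hA.eigenvalues := rfl
  have hspec : A = U * Matrix.diagonal hA.eigenvalues * Uᵀ := by
    have h := hA.spectral_theorem
    rwa [hdiag, Unitary.conjStarAlgAut_apply, hstar] at h
  have hq : u ⬝ᵥ A *ᵥ u = ∑ j, hA.eigenvalues j * (w j)^2 := by
    conv_lhs => rw [hspec]
    rw [← mulVec_mulVec, ← mulVec_mulVec, dotProduct_mulVec u U, ← mulVec_transpose]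
    simp only [dotProduct, Matrix.mulVec_diagonal, hwdef, sq]
    exact Finset.sum_congr rfl fun j _ => by ring
  have hw2 : ∑ j, (w j)^2 = ∑ i, (u i)^2 := by
    have h1 : w ⬝ᵥ w = u ⬝ᵥ u := by
      rw [hwdef, dotProduct_mulVec, vecMul_transpose, mulVec_mulVec]
      have hUU : U * Uᵀ = 1 := by
        rw [← hstar]; exact Matrix.mem_unitaryGroup_iff.mp hA.eigenvectorUnitary.2
      rw [hUU, one_mulVec]
    simpa [dotProduct, sq] using h1
  have hlam : ∀ j, hA.eigenvalues j ≤ ⨆ j, hA.eigenvalues j := fun j =>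
    le_ciSup (Set.Finite.bddAbove (Set.finite_range _)) j
  rw [hq]
  calc ∑ j, hA.eigenvalues j * (w j)^2 ≤ ∑ j, (⨆ j, hA.eigenvalues j) * (w j)^2 :=
      Finset.sum_le_sum fun j _ => mul_le_mul_of_nonneg_right (hlam j) (sq_nonneg _)
    _ = _ := by rw [← Finset.mul_sum, hw2]

end Helpers

/-- Worst-case error of the rank-1 empirical estimate `R = (e_y - p)(e_y - p)ᵀ`
of `I = diag(p) - p pᵀ`, when `y` attains the minimum entry of `p`:
`‖R - I‖_F ≥ 1 + ‖p‖² - λ_C - 2 p_(1) ≥ 2‖p‖² - 2 p_(1)`. -/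
theorem simplex_efim_worst_case (C : ℕ) (hC : 2 ≤ C) (p : Fin C → ℝ)
    (hp : ∀ i, 0 ≤ p i) (hsum : ∑ i, p i = 1)
    (hI : (Matrix.diagonal p - Matrix.vecMulVec p p).IsHermitian)
    (lamC : ℝ) (hlam : lamC = ⨆ j, hI.eigenvalues j)
    (y : Fin C) (hy : ∀ i, p y ≤ p i) :
    1 + (∑ i, (p i) ^ 2) - lamC - 2 * p y ≤
      Real.sqrt (∑ i, ∑ j,
        ((Matrix.vecMulVec ((Pi.single y 1 : Fin C → ℝ) - p)
            ((Pi.single y 1 : Fin C → ℝ) - p)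
          - (Matrix.diagonal p - Matrix.vecMulVec p p)) i j) ^ 2) ∧
    2 * (∑ i, (p i) ^ 2) - 2 * p y ≤
      1 + (∑ i, (p i) ^ 2) - lamC - 2 * p y := by
  have hne : Nonempty (Fin C) := ⟨⟨0, by omega⟩⟩
  set A : Matrix (Fin C) (Fin C) ℝ := Matrix.diagonal p - Matrix.vecMulVec p p with hA
  -- PSD
  have hPSD : A.PosSemidef := by
    refine Matrix.posSemidef_iff_dotProduct_mulVec.mpr ⟨hI, fun x => ?_⟩
    have hq : dotProduct (star x) (A *ᵥ x)
        = (∑ i, p i * x i ^ 2) - (∑ i, p i * x i) ^ 2 := by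
      simp only [hA, Matrix.sub_mulVec, dotProduct_sub, star_trivial]
      congr 1
      · simp only [dotProduct, Matrix.mulVec_diagonal]
        exact Finset.sum_congr rfl fun i _ => by ring
      · simp only [dotProduct, Matrix.mulVec, Matrix.vecMulVec_apply, sq]
        rw [Finset.sum_mul]
        refine Finset.sum_congr rfl fun i _ => ?_
        rw [Finset.mul_sum, Finset.mul_sum]
        exact Finset.sum_congr rfl fun j _ => by ring
    rw [hq]
    have hcs : (∑ i, p i * x i) ^ 2 ≤ (∑ i, p i) * (∑ i, p i * x i ^ 2) := by
      have h := Finset.sum_mul_sq_le_sq_mul_sq Finset.univ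
        (fun i => Real.sqrt (p i)) (fun i => Real.sqrt (p i) * x i)
      have e1 : ∀ i : Fin C, Real.sqrt (p i) * (Real.sqrt (p i) * x i) = p i * x i := by
        intro i; rw [← mul_assoc, Real.mul_self_sqrt (hp i)]
      have e2 : ∀ i : Fin C, Real.sqrt (p i) ^ 2 = p i := fun i => Real.sq_sqrt (hp i)
      have e3 : ∀ i : Fin C, (Real.sqrt (p i) * x i) ^ 2 = p i * x i ^ 2 := by
        intro i; rw [mul_pow, e2]
      simpa only [e1, e2, e3] using h
    rw [hsum, one_mul] at hcs
    linarith
  -- eigenvalue sum = trace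
  have htr : ∑ j, hI.eigenvalues j = 1 - ∑ i, p i ^ 2 := by
    have h1 : A.trace = ∑ j, hI.eigenvalues j := by
      have hdiag : (RCLike.ofReal ∘ hI.eigenvalues : Fin C → ℝ) = hI.eigenvalues := rfl
      conv_lhs => rw [hI.spectral_theorem]
      rw [hdiag, Unitary.conjStarAlgAut_apply, Matrix.trace_mul_cycle,
        Matrix.mem_unitaryGroup_iff'.mp hI.eigenvectorUnitary.2, one_mul,
        Matrix.trace_diagonal]
    have h2 : A.trace = 1 - ∑ i, p i ^ 2 := by
      rw [hA, Matrix.trace_sub, Matrix.trace_diagonal, hsum]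
      congr 1
      simp [Matrix.trace, Matrix.diag, Matrix.vecMulVec_apply, sq]
    rw [← h1, h2]
  have hlam_le : lamC ≤ 1 - ∑ i, p i ^ 2 := by
    rw [hlam]
    refine ciSup_le fun j => ?_
    rw [← htr]
    exact Finset.single_le_sum (fun i _ => hPSD.eigenvalues_nonneg i) (Finset.mem_univ j)
  refine ⟨?_, by linarith⟩
  -- first inequality
  set u : Fin C → ℝ := (Pi.single y 1 : Fin C → ℝ) - p with hu
  set M : Matrix (Fin C) (Fin C) ℝ := Matrix.vecMulVec u u - A with hM
  set s : ℝ := ∑ i, (u i) ^ 2 with hs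
  have hs_eq : s = 1 + (∑ i, p i ^ 2) - 2 * p y := by
    have : ∀ i, (u i) ^ 2 = ((Pi.single y 1 : Fin C → ℝ) i) ^ 2
        - 2 * ((Pi.single y 1 : Fin C → ℝ) i * p i) + p i ^ 2 := by
      intro i; simp only [hu, Pi.sub_apply]; ring
    rw [hs, Finset.sum_congr rfl fun i _ => this i]
    rw [Finset.sum_add_distrib, Finset.sum_sub_distrib, ← Finset.mul_sum]
    have e1 : ∑ i, ((Pi.single y 1 : Fin C → ℝ) i) ^ 2 = 1 := by
      simp [Pi.single_apply, sq, Finset.sum_ite_eq']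
    have e2 : ∑ i, (Pi.single y 1 : Fin C → ℝ) i * p i = p y := by
      simp [Pi.single_apply, Finset.sum_ite_eq']
    rw [e1, e2]; ring
  have hsdot : dotProduct u u = s := by simp [hs, dotProduct, sq]
  have hRuu : dotProduct u (Matrix.vecMulVec u u *ᵥ u) = s * s := by
    have h1 : dotProduct u (Matrix.vecMulVec u u *ᵥ u)
        = (dotProduct u u) * (dotProduct u u) := by
      simp only [dotProduct, Matrix.mulVec, Matrix.vecMulVec_apply]
      rw [Finset.sum_mul]
      refine Finset.sum_congr rfl fun i _ => ?_
      rw [Finset.mul_sum, Finset.mul_sum]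
      exact Finset.sum_congr rfl fun j _ => by ring
    rw [h1, hsdot]
  have hray : dotProduct u (A *ᵥ u) ≤ lamC * s := by
    rw [hlam]; exact rayleigh_le hI u
  have hquad : s * s - lamC * s ≤ dotProduct u (M *ᵥ u) := by
    rw [hM, Matrix.sub_mulVec, dotProduct_sub, hRuu]
    linarith
  have hF := frob_quad_bound M u
  have hs_pos : 0 < s := by
    have hyy : 2 * p y ≤ 1 := by
      have : Nontrivial (Fin C) := Fin.nontrivial_iff_two_le.mpr hC
      obtain ⟨i, hi⟩ := exists_ne y
      have hsub : p y + p i ≤ ∑ j, p j := by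
        have : ∑ j ∈ ({y, i} : Finset (Fin C)), p j ≤ ∑ j, p j :=
          Finset.sum_le_sum_of_subset_of_nonneg (Finset.subset_univ _)
            (fun j _ _ => hp j)
        rwa [Finset.sum_pair (Ne.symm hi)] at this
      have := hy i
      linarith [hsum ▸ hsub]
    have huy : u y = 1 - p y := by simp [hu]
    have h1 : (u y) ^ 2 ≤ s :=
      Finset.single_le_sum (fun i _ => sq_nonneg (u i)) (Finset.mem_univ y)
    rw [huy] at h1
    nlinarith
  have hfin : s - lamC ≤ Real.sqrt (∑ i, ∑ j, (M i j) ^ 2) := by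
    have h := hquad.trans hF
    have := (mul_le_mul_iff_of_pos_right hs_pos).mp (by linarith [h] :
      (s - lamC) * s ≤ Real.sqrt (∑ i, ∑ j, (M i j) ^ 2) * s)
    linarith [this]
  rw [hs_eq] at hfin
  linarith [hfin]
end
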